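/- Let x₀* be a fixed point in the positive orthant of the conservative Lotka-Volterra system ẋ = diag(x)(λ + K·D·x) with K skew-symmetric, D diagonal and definite (all diagonal entries of the same sign), λ = K·L. Then x₀* is Lyapunov stable. -/

import Mathlib

/-!
Volterra's function `V y = ∑ i, c i * (y i - x₀ i * log (y i))`, with weights `c = ±d > 0`, has a
strict minimum at `x₀` on the positive orthant, and it is a first integral of the system: along a
solution its derivative is `±⟪z, K z⟫ = 0` for `z = D (y - x₀)`, since `K` is skew-symmetric.
A solution starting close enough to `x₀` therefore never reaches a small sphere around `x₀`, on
which `V` exceeds `V x₀` by a positive margin.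
-/

open Real Finset Matrix

theorem Matrix.dotProduct_mulVec_self_eq_zero_of_transpose_eq_neg {ι R : Type*} [Fintype ι]
    [CommRing R] [IsAddTorsionFree R] {K : Matrix ι ι R} (hK : Kᵀ = -K) (z : ι → R) :
    z ⬝ᵥ K *ᵥ z = 0 := by
  refine self_eq_neg.1 ?_
  conv_lhs => rw [dotProduct_mulVec, ← mulVec_transpose, hK, neg_mulVec, neg_dotProduct,
    dotProduct_comm]

theorem Real.sub_mul_log_lt {a b : ℝ} (ha : 0 < a) (hb : 0 < b) (hab : a ≠ b) :
    b - b * log b < a - b * log a := by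
  have h := log_lt_sub_one_of_pos (div_pos ha hb) (by rwa [ne_eq, div_eq_one_iff_eq hb.ne'])
  rw [log_div ha.ne' hb.ne', lt_sub_iff_add_lt, lt_div_iff₀ hb] at h
  linarith

theorem Real.sub_mul_log_le {a b : ℝ} (ha : 0 < a) (hb : 0 < b) :
    b - b * log b ≤ a - b * log a := by
  rcases eq_or_ne a b with rfl | hab
  · exact le_rfl
  · exact (sub_mul_log_lt ha hb hab).le

theorem ContinuousOn.exists_eq_and_forall_le_of_lt_of_le {f : ℝ → ℝ} {a b c : ℝ} (hab : a ≤ b)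
    (hf : ContinuousOn f (Set.Icc a b)) (ha : f a < c) (hb : c ≤ f b) :
    ∃ t ∈ Set.Icc a b, f t = c ∧ ∀ u ∈ Set.Icc a t, f u ≤ c := by
  set S := Set.Icc a b ∩ f ⁻¹' Set.Ici c
  have hbdd : BddBelow S := ⟨a, fun u hu => hu.1.1⟩
  have htS : sInf S ∈ S :=
    (hf.preimage_isClosed_of_isClosed isClosed_Icc isClosed_Ici).csInf_mem
      ⟨b, Set.right_mem_Icc.2 hab, hb⟩ hbdd
  have hbefore : ∀ u ∈ Set.Ico a (sInf S), f u < c := fun u hu =>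
    not_le.1 fun h => (csInf_le hbdd ⟨⟨hu.1, hu.2.le.trans htS.1.2⟩, h⟩).not_gt hu.2
  obtain ⟨u, hu, hfu⟩ := intermediate_value_Icc htS.1.1
    (hf.mono (Set.Icc_subset_Icc_right htS.1.2)) ⟨ha.le, htS.2⟩
  have hfS : f (sInf S) = c := by
    rwa [← hu.2.eq_or_lt.resolve_right fun h => (hbefore u ⟨hu.1, h⟩).ne hfu]
  refine ⟨sInf S, htS.1, hfS, fun v hv => ?_⟩
  rcases hv.2.eq_or_lt with rfl | hlt
  · exact hfS.le
  · exact (hbefore v ⟨hv.1, hlt⟩).le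

theorem lyapunov_stability {E : Type*} [NormedAddCommGroup E] [ProperSpace E]
    {V : E → ℝ} {x₀ : E} {r₀ : ℝ} (hr₀ : 0 < r₀) (hV : ContinuousOn V (Metric.closedBall x₀ r₀))
    (hmin : ∀ y ∈ Metric.closedBall x₀ r₀, y ≠ x₀ → V x₀ < V y) {ε : ℝ} (hε : 0 < ε) :
    ∃ δ > 0, ∀ x : ℝ → E, ContinuousOn x (Set.Ici 0) →
      (∀ T ≥ 0, Set.MapsTo x (Set.Icc 0 T) (Metric.closedBall x₀ r₀) → V (x T) ≤ V (x 0)) →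
      ‖x 0 - x₀‖ < δ → ∀ t ≥ 0, ‖x t - x₀‖ < ε := by
  set r := min (ε / 2) r₀
  have hr : 0 < r := lt_min (half_pos hε) hr₀
  have hsphere : Metric.sphere x₀ r ⊆ Metric.closedBall x₀ r₀ :=
    Metric.sphere_subset_closedBall.trans (Metric.closedBall_subset_closedBall (min_le_right _ _))
  obtain ⟨M, hM, hVM⟩ := (isCompact_sphere x₀ r).exists_forall_le' (hV.mono hsphere)
    fun y hy => hmin y (hsphere hy) (Metric.ne_of_mem_sphere hy hr.ne')
  obtain ⟨δ, hδ, hball⟩ := Metric.mem_nhds_iff.1 <|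
    (hV.continuousAt (Metric.closedBall_mem_nhds x₀ hr₀)).preimage_mem_nhds (Iio_mem_nhds hM)
  refine ⟨min δ r, lt_min hδ hr, fun x hx hVx hx0 t ht => ?_⟩
  suffices ‖x t - x₀‖ < r from this.trans_le ((min_le_left _ _).trans (half_lt_self hε).le)
  by_contra! hrt
  obtain ⟨T, hT, hTr, hbefore⟩ :=
    ContinuousOn.exists_eq_and_forall_le_of_lt_of_le (f := fun u => ‖x u - x₀‖) ht
    ((hx.mono Set.Icc_subset_Ici_self).sub continuousOn_const).norm
    (hx0.trans_le (min_le_right _ _)) hrt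
  have hmaps : Set.MapsTo x (Set.Icc 0 T) (Metric.closedBall x₀ r₀) := fun u hu => by
    rw [Metric.mem_closedBall, dist_eq_norm]
    exact (hbefore u hu).trans (min_le_right _ _)
  have hV0 : V (x 0) < M :=
    hball (by rw [Metric.mem_ball, dist_eq_norm]; exact hx0.trans_le (min_le_left _ _))
  have hVT : M ≤ V (x T) := hVM _ (by rw [mem_sphere_iff_norm, hTr])
  exact (hVx T hT.1 hmaps).not_gt (hV0.trans_le hVT)

section LotkaVolterra

variable {ι : Type*} [Fintype ι]

theorem isOpen_setOf_forall_pos : IsOpen {y : ι → ℝ | ∀ i, 0 < y i} := by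
  simpa only [Set.ofPred_forall] using
    isOpen_iInter_of_finite fun i => isOpen_lt continuous_const (continuous_apply i)

theorem lv_field_eq_of_fixedPoint {A : Matrix ι ι ℝ} {lam x₀ : ι → ℝ} (hx₀ : ∀ i, 0 < x₀ i)
    (hfix : ∀ i, x₀ i * (lam i + (A *ᵥ x₀) i) = 0) (y : ι → ℝ) (i : ι) :
    y i * (lam i + (A *ᵥ y) i) = y i * (A *ᵥ (y - x₀)) i := by
  have hlam := (mul_eq_zero.1 (hfix i)).resolve_left (hx₀ i).ne'
  rw [mulVec_sub, Pi.sub_apply, eq_neg_of_add_eq_zero_left hlam]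
  ring

noncomputable def lvLyapunov (c x₀ y : ι → ℝ) : ℝ :=
  ∑ i, c i * (y i - x₀ i * log (y i))

variable {c x₀ : ι → ℝ}

theorem continuousOn_lvLyapunov : ContinuousOn (lvLyapunov c x₀) {y | ∀ i, 0 < y i} :=
  continuousOn_finsetSum _ fun i _ =>
    continuousOn_const.mul <| (continuous_apply i).continuousOn.sub <| continuousOn_const.mul <|
      (continuous_apply i).continuousOn.log fun _ hy => (hy i).ne'

theorem lvLyapunov_lt (hc : ∀ i, 0 < c i) (hx₀ : ∀ i, 0 < x₀ i) {y : ι → ℝ}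
    (hy : ∀ i, 0 < y i) (hne : y ≠ x₀) : lvLyapunov c x₀ x₀ < lvLyapunov c x₀ y := by
  obtain ⟨j, hj⟩ := Function.ne_iff.1 hne
  refine sum_lt_sum (fun i _ => ?_) ⟨j, mem_univ j, ?_⟩
  · exact mul_le_mul_of_nonneg_left (sub_mul_log_le (hy i) (hx₀ i)) (hc i).le
  · exact mul_lt_mul_of_pos_left (sub_mul_log_lt (hy j) (hx₀ j) hj) (hc j)

theorem HasDerivAt.lvLyapunov {x : ℝ → ι → ℝ} {x' : ι → ℝ} {t : ℝ} (hx : HasDerivAt x x' t)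
    (hpos : ∀ i, 0 < x t i) :
    HasDerivAt (fun t => lvLyapunov c x₀ (x t)) (∑ i, c i * (1 - x₀ i / x t i) * x' i) t := by
  have hxi : ∀ i, HasDerivAt (fun t => x t i) (x' i) t := fun i => hasDerivAt_pi.1 hx i
  refine (HasDerivAt.fun_sum (u := univ) fun i _ => ((hxi i).fun_sub
    (((hxi i).log (hpos i).ne').const_mul (x₀ i))).const_mul (c i)).congr_deriv
    (Finset.sum_congr rfl fun i _ => ?_)
  field_simp [(hpos i).ne']

variable [DecidableEq ι]

theorem lvLyapunov_deriv_eq_zero {K : Matrix ι ι ℝ} (hK : Kᵀ = -K) (s : ℝ) (d x₀ y : ι → ℝ)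
    (hy : ∀ i, 0 < y i) :
    ∑ i, (s • d) i * (1 - x₀ i / y i) * (y i * ((K * diagonal d) *ᵥ (y - x₀)) i) = 0 := by
  set z := d * (y - x₀)
  have hz : (K * diagonal d) *ᵥ (y - x₀) = K *ᵥ z := by
    rw [← mulVec_mulVec]
    exact congrArg _ (funext fun i => mulVec_diagonal d (y - x₀) i)
  calc _ = s * (z ⬝ᵥ K *ᵥ z) := by
        rw [hz, dotProduct, mul_sum]
        refine sum_congr rfl fun i _ => ?_
        simp only [z, Pi.smul_apply, Pi.mul_apply, Pi.sub_apply, smul_eq_mul]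
        field_simp [(hy i).ne']
    _ = 0 := by rw [dotProduct_mulVec_self_eq_zero_of_transpose_eq_neg hK, mul_zero]

theorem lvLyapunov_eq_of_hasDerivAt {K : Matrix ι ι ℝ} (hK : Kᵀ = -K) (s : ℝ) {d : ι → ℝ}
    {x : ℝ → ι → ℝ} {T : ℝ} (hT : 0 ≤ T)
    (hx : ∀ t ∈ Set.Icc 0 T, HasDerivAt x (fun i => x t i * ((K * diagonal d) *ᵥ (x t - x₀)) i) t)
    (hpos : ∀ t ∈ Set.Icc 0 T, ∀ i, 0 < x t i) :
    lvLyapunov (s • d) x₀ (x T) = lvLyapunov (s • d) x₀ (x 0) := by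
  have hV := fun t ht => (hx t ht).lvLyapunov (c := s • d) (x₀ := x₀) (hpos t ht)
  refine constant_of_has_deriv_right_zero (fun t ht => (hV t ht).continuousAt.continuousWithinAt)
    (fun t ht => ?_) T ⟨hT, le_rfl⟩
  have h := (hV t (Set.Ico_subset_Icc_self ht)).hasDerivWithinAt (s := Set.Ici t)
  rwa [lvLyapunov_deriv_eq_zero hK s d x₀ (x t) (hpos t (Set.Ico_subset_Icc_self ht))] at h

end LotkaVolterra

theorem conservative_lv_fixed_point_stable_general (m : ℕ)
    (K : Matrix (Fin m) (Fin m) ℝ) (hK : Kᵀ = -K)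
    (d : Fin m → ℝ) (hd : (∀ i, 0 < d i) ∨ (∀ i, d i < 0))
    (lam : Fin m → ℝ)
    (F : (Fin m → ℝ) → (Fin m → ℝ))
    (hF : F = fun x i => x i * (lam i + ((K * Matrix.diagonal d).mulVec x) i))
    (x₀ : Fin m → ℝ) (hx₀pos : ∀ i, 0 < x₀ i) (hfix : F x₀ = 0) :
    ∀ ε > (0:ℝ), ∃ δ > (0:ℝ), ∀ x : ℝ → (Fin m → ℝ),
      (∀ t : ℝ, 0 ≤ t → HasDerivAt x (F (x t)) t) →
      ‖x 0 - x₀‖ < δ → ∀ t > (0:ℝ), ‖x t - x₀‖ < ε := by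
  intro ε hε
  obtain ⟨s, hs⟩ : ∃ s : ℝ, ∀ i, 0 < (s • d) i :=
    hd.elim (fun h => ⟨1, by simpa using h⟩) (fun h => ⟨-1, by simpa using h⟩)
  have hFeq : ∀ y, F y = fun i => y i * ((K * diagonal d) *ᵥ (y - x₀)) i := by
    subst hF
    exact fun y => funext (lv_field_eq_of_fixedPoint hx₀pos (congrFun hfix) y)
  obtain ⟨r₀, hr₀, hball⟩ :=
    Metric.nhds_basis_closedBall.mem_iff.1 (isOpen_setOf_forall_pos.mem_nhds hx₀pos)
  obtain ⟨δ, hδ, hstable⟩ := lyapunov_stability hr₀ (continuousOn_lvLyapunov.mono hball)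
    (fun y hy hne => lvLyapunov_lt hs hx₀pos (hball hy) hne) hε
  refine ⟨δ, hδ, fun x hx hx0 t ht => hstable x
    (fun t ht => (hx t ht).continuousAt.continuousWithinAt) (fun T hT hmaps => ?_) hx0 t ht.le⟩
  exact (lvLyapunov_eq_of_hasDerivAt hK s hT (fun t ht => hFeq (x t) ▸ hx t ht.1)
    fun t ht => hball (hmaps ht)).le

theorem conservative_lv_fixed_point_stable (m : ℕ)
    (K : Matrix (Fin m) (Fin m) ℝ) (hK : Kᵀ = -K)
    (d : Fin m → ℝ) (hd : (∀ i, 0 < d i) ∨ (∀ i, d i < 0))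
    (L : Fin m → ℝ)
    (lam : Fin m → ℝ) (hlam : lam = K.mulVec L)
    (F : (Fin m → ℝ) → (Fin m → ℝ))
    (hF : F = fun x i => x i * (lam i + ((K * Matrix.diagonal d).mulVec x) i))
    (x₀ : Fin m → ℝ) (hx₀pos : ∀ i, 0 < x₀ i) (hfix : F x₀ = 0) :
    ∀ ε > (0:ℝ), ∃ δ > (0:ℝ), ∀ x : ℝ → (Fin m → ℝ),
      (∀ t : ℝ, 0 ≤ t → HasDerivAt x (F (x t)) t) →
      ‖x 0 - x₀‖ < δ → ∀ t > (0:ℝ), ‖x t - x₀‖ < ε :=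
  conservative_lv_fixed_point_stable_general m K hK d hd lam F hF x₀ hx₀pos hfix
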